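/- arXiv:1204.5923 — 3 statements merged into one kernel-verified Lean document; each statement's English description precedes it below -/
import Mathlib

section
/- For every nonnegative integer n, 2 times the sum over all triples of nonnegative integers (i, j, k) with i + j + k = n of C_{2i} · C_{2j} · B_{2k} equals B_{2n+1}. -/
/-!
Let `c = ∑ Cₘ Xᵐ` and `b = ∑ Bₘ Xᵐ`. Then `c = 1 + X c²`, and since `Bₘ = (m + 1) Cₘ` we have
`b = (X c)'`; differentiating `X c = X + (X c)²` gives `b = 1 + 2 X c b`. Write
`c = E(X²) + X O(X²)` and `b = P(X²) + X Q(X²)`. The even part of the first relation is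
`E (1 - 2 X O) = 1`, the odd part of the second is `Q (1 - 2 X O) = 2 E P`, so `Q = 2 E² P`.
The `n`-th coefficient of this identity is the theorem.
-/

open Finset PowerSeries

namespace PowerSeries

section EvenOdd

variable {R : Type*}

noncomputable def evenPart [Semiring R] (f : R⟦X⟧) : R⟦X⟧ := mk fun n => coeff (2 * n) f

noncomputable def oddPart [Semiring R] (f : R⟦X⟧) : R⟦X⟧ := mk fun n => coeff (2 * n + 1) f

variable [CommRing R]

local notation "σ" => expand 2 two_ne_zero

theorem coeff_two_mul_expand_add_X_mul_expand (a b : R⟦X⟧) (n : ℕ) :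
    coeff (2 * n) (σ a + X * σ b) = coeff n a := by
  cases n with
  | zero => simp
  | succ n =>
    rw [map_add, coeff_expand_mul, show 2 * (n + 1) = 2 * n + 1 + 1 by ring, coeff_succ_X_mul,
      coeff_expand_of_not_dvd _ _ _ (by omega), add_zero]

theorem coeff_two_mul_add_one_expand_add_X_mul_expand (a b : R⟦X⟧) (n : ℕ) :
    coeff (2 * n + 1) (σ a + X * σ b) = coeff n b := by
  rw [map_add, coeff_succ_X_mul, coeff_expand_mul, coeff_expand_of_not_dvd _ _ _ (by omega),
    zero_add]

theorem expand_evenPart_add_X_mul_expand_oddPart (f : R⟦X⟧) :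
    σ (evenPart f) + X * σ (oddPart f) = f := by
  ext n
  obtain ⟨m, rfl | rfl⟩ := Nat.even_or_odd' n
  · rw [coeff_two_mul_expand_add_X_mul_expand, evenPart, coeff_mk]
  · rw [coeff_two_mul_add_one_expand_add_X_mul_expand, oddPart, coeff_mk]

theorem evenPart_expand_add_X_mul_expand (a b : R⟦X⟧) : evenPart (σ a + X * σ b) = a := by
  ext n
  rw [evenPart, coeff_mk, coeff_two_mul_expand_add_X_mul_expand]

theorem oddPart_expand_add_X_mul_expand (a b : R⟦X⟧) : oddPart (σ a + X * σ b) = b := by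
  ext n
  rw [oddPart, coeff_mk, coeff_two_mul_add_one_expand_add_X_mul_expand]

theorem evenPart_eq_of_eq_one_add_X_mul_sq {c : R⟦X⟧} (hc : c = 1 + X * c ^ 2) :
    evenPart c = 1 + 2 * X * evenPart c * oddPart c := by
  have hsplit : c = σ (1 + 2 * X * evenPart c * oddPart c) +
      X * σ (evenPart c ^ 2 + X * oddPart c ^ 2) :=
    calc c = 1 + X * c ^ 2 := hc
      _ = 1 + X * (σ (evenPart c) + X * σ (oddPart c)) ^ 2 := by
        rw [expand_evenPart_add_X_mul_expand_oddPart]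
      _ = _ := by
        simp only [map_add, map_mul, map_pow, map_one, map_ofNat, expand_X]
        ring
  nth_rw 1 [hsplit, evenPart_expand_add_X_mul_expand]

theorem oddPart_eq_of_eq_one_add_two_mul_X_mul {b c : R⟦X⟧} (hb : b = 1 + 2 * X * c * b) :
    oddPart b = 2 * evenPart c * evenPart b + 2 * X * oddPart c * oddPart b := by
  have hsplit : b = σ (1 + 2 * X * (evenPart c * oddPart b + oddPart c * evenPart b)) +
      X * σ (2 * evenPart c * evenPart b + 2 * X * oddPart c * oddPart b) :=
    calc b = 1 + 2 * X * c * b := hb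
      _ = 1 + 2 * X * (σ (evenPart c) + X * σ (oddPart c)) *
            (σ (evenPart b) + X * σ (oddPart b)) := by
        rw [expand_evenPart_add_X_mul_expand_oddPart, expand_evenPart_add_X_mul_expand_oddPart]
      _ = _ := by
        simp only [map_add, map_mul, map_one, map_ofNat, expand_X]
        ring
  nth_rw 1 [hsplit, oddPart_expand_add_X_mul_expand]

theorem oddPart_eq_two_mul_evenPart_sq_mul_evenPart {b c : R⟦X⟧} (hc : c = 1 + X * c ^ 2)
    (hb : b = 1 + 2 * X * c * b) : oddPart b = 2 * evenPart c ^ 2 * evenPart b := by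
  linear_combination (-oddPart b) * evenPart_eq_of_eq_one_add_X_mul_sq hc +
    evenPart c * oddPart_eq_of_eq_one_add_two_mul_X_mul hb

end EvenOdd

noncomputable def centralBinomSeries : ℕ⟦X⟧ := mk Nat.centralBinom

@[simp]
theorem centralBinomSeries_coeff (n : ℕ) : coeff n centralBinomSeries = n.centralBinom := by
  simp [centralBinomSeries]

theorem derivative_X_mul_catalanSeries : d⁄dX ℕ (X * catalanSeries) = centralBinomSeries := by
  ext n
  rw [coeff_derivative, coeff_succ_X_mul, catalanSeries_coeff, centralBinomSeries_coeff,
    ← succ_mul_catalan_eq_centralBinom, mul_comm]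
  rfl

theorem one_add_two_mul_X_mul_catalanSeries_mul_centralBinomSeries :
    1 + 2 * X * catalanSeries * centralBinomSeries = centralBinomSeries := by
  set u := X * catalanSeries with hu_def
  have hu : u = X + u ^ 2 := by
    nth_rw 1 [hu_def, ← catalanSeries_sq_mul_X_add_one]
    ring
  have hu' := congrArg (d⁄dX ℕ) hu
  rw [map_add, derivative_X, derivative_pow, derivative_X_mul_catalanSeries] at hu'
  nth_rw 2 [hu']
  push_cast
  ring

end PowerSeries

/-- For every nonnegative integer `n`,
`2 ∑_{i+j+k=n} C_{2i} C_{2j} B_{2k} = B_{2n+1}`. -/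
theorem two_mul_triple_convolution (n : ℕ) :
    2 * ∑ p ∈ Finset.HasAntidiagonal.antidiagonal n, ∑ q ∈ Finset.HasAntidiagonal.antidiagonal p.2,
        catalan (2 * p.1) * catalan (2 * q.1) * Nat.centralBinom (2 * q.2) =
      Nat.centralBinom (2 * n + 1) := by
  have hc : map (Nat.castRingHom ℤ) catalanSeries =
      1 + X * map (Nat.castRingHom ℤ) catalanSeries ^ 2 := by
    nth_rw 1 [← catalanSeries_sq_mul_X_add_one]
    simp only [map_add, map_mul, map_pow, map_one, map_X]
    ring
  have hb : map (Nat.castRingHom ℤ) centralBinomSeries = 1 + 2 * X *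
      map (Nat.castRingHom ℤ) catalanSeries * map (Nat.castRingHom ℤ) centralBinomSeries := by
    nth_rw 1 [← one_add_two_mul_X_mul_catalanSeries_mul_centralBinomSeries]
    simp only [map_add, map_mul, map_one, map_ofNat, map_X]
  have h := congrArg (coeff n) (oddPart_eq_two_mul_evenPart_sq_mul_evenPart hc hb)
  rw [sq, mul_assoc, mul_assoc, ← map_ofNat (C (R := ℤ)) 2, coeff_C_mul] at h
  simp only [oddPart, evenPart, coeff_mk, coeff_map, coeff_mul, catalanSeries_coeff,
    centralBinomSeries_coeff] at h
  zify
  simp only [mul_sum, mul_assoc] at h ⊢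
  exact h.symm
end

section
/- For every nonnegative integer n, the number of even-zeroed paths of length 4n + 1 whose total sum of steps equals 1 (i.e., even-zeroed paths from the origin to the point (4n+1, 1)) equals the sum over all pairs of nonnegative integers (i, j) with i + j = n of C_{2i} · C_{2j}. -/
/-!
Paths are words in `DyckStep`s. A balanced even-zeroed path of length `4t` is a concatenation of
arches (paths of height `0` with no interior zero) whose lengths are divisible by `4`, and an arch
of length `2(m+1)` is `U w D` or its mirror image, with `w` a Dyck word of semilength `m`.
Splitting off the first arch gives `E(t+1) = ∑_{i+j=t} 2 C_{2i+1} E(j)`, which is the Catalan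
recurrence for `C_{2t+2}` with the two factors sorted by parity; hence `E(t) = C_{2t}`.
An even-zeroed path of length `4n+1` ending at height `1` splits at its last zero into a balanced
even-zeroed path of length `4i` and a path of length `4j+1` that never returns to `0`, that is,
`U` followed by a Dyck word of semilength `2j`.
-/

/-- A path of length `l` is a sequence of `l` steps, each `+1` (up, `true`) or `-1`
(down, `false`). `psum p k` is the partial sum of the first `k` steps of `p`
(the height of the path after `k` steps). -/
def psum {l : ℕ} (p : Fin l → Bool) (k : ℕ) : ℤ :=
  ∑ i ∈ Finset.univ.filter (fun i : Fin l => (i : ℕ) < k), (if p i then (1 : ℤ) else -1)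

/-- A path is even-zeroed if every index at which its partial sum is `0`
(i.e., every `x`-intercept) is divisible by `4`. -/
def IsEvenZeroed {l : ℕ} (p : Fin l → Bool) : Prop :=
  ∀ k ≤ l, psum p k = 0 → 4 ∣ k

/-- A path of length `2m` is balanced if its total sum of steps is `0`
(equivalently, it has `m` up-steps and `m` down-steps). -/
def IsBalanced {l : ℕ} (p : Fin l → Bool) : Prop :=
  psum p l = 0

open List DyckStep Finset

lemma card_eq_sum_antidiagonal_of_unique_append {α : Type*} (X Y : ℕ → Set (List α))
    (Z : Set (List α)) (n : ℕ) [∀ i, Finite (X i)] [∀ j, Finite (Y j)]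
    (append_mem : ∀ i j, i + j = n → ∀ x ∈ X i, ∀ y ∈ Y j, x ++ y ∈ Z)
    (exists_append : ∀ z ∈ Z, ∃ i j, i + j = n ∧ ∃ x ∈ X i, ∃ y ∈ Y j, x ++ y = z)
    (unique : ∀ i j i' j' x y x' y', x ∈ X i → y ∈ Y j → x' ∈ X i' → y' ∈ Y j' →
      x ++ y = x' ++ y' → i = i' ∧ x = x') :
    Nat.card Z = ∑ ij ∈ antidiagonal n, Nat.card (X ij.1) * Nat.card (Y ij.2) := by
  let f : (Σ ij : antidiagonal n, X ij.1.1 × Y ij.1.2) → Z := fun ⟨ij, x, y⟩ =>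
    ⟨x ++ y, append_mem _ _ (mem_antidiagonal.mp ij.2) x x.2 y y.2⟩
  have hf : Function.Bijective f := by
    refine ⟨?_, fun ⟨z, hz⟩ => ?_⟩
    · rintro ⟨⟨⟨i, j⟩, hij⟩, x, y⟩ ⟨⟨⟨i', j'⟩, hij'⟩, x', y'⟩ h
      have hxy : x.1 ++ y.1 = x'.1 ++ y'.1 := congrArg Subtype.val h
      have hsum : i + j = n := mem_antidiagonal.mp hij
      have hsum' : i' + j' = n := mem_antidiagonal.mp hij'
      obtain ⟨hi, hx⟩ := unique _ _ _ _ _ _ _ _ x.2 y.2 x'.2 y'.2 hxy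
      obtain rfl : i = i' := hi
      obtain rfl : j = j' := by omega
      obtain rfl : x = x' := Subtype.ext hx
      obtain rfl : y = y' := Subtype.ext (append_cancel_left hxy)
      rfl
    · obtain ⟨i, j, hij, x, hx, y, hy, rfl⟩ := exists_append z hz
      exact ⟨⟨⟨(i, j), mem_antidiagonal.mpr hij⟩, ⟨x, hx⟩, ⟨y, hy⟩⟩, rfl⟩
  rw [← Nat.card_eq_of_bijective f hf, Nat.card_sigma, ← sum_coe_sort (antidiagonal n)]
  simp only [Nat.card_prod]

lemma sum_antidiagonal_two_mul_add_one {M : Type*} [AddCommMonoid M] (f : ℕ → ℕ → M)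
    (t : ℕ) :
    ∑ ij ∈ antidiagonal (2 * t + 1), f ij.1 ij.2 =
      ∑ ij ∈ antidiagonal t, (f (2 * ij.1) (2 * ij.2 + 1) + f (2 * ij.1 + 1) (2 * ij.2)) := by
  induction t generalizing f with
  | zero => simp [Nat.sum_antidiagonal_succ]
  | succ t ih =>
    rw [show 2 * (t + 1) + 1 = 2 * t + 1 + 1 + 1 by ring, Nat.sum_antidiagonal_succ,
      Nat.sum_antidiagonal_succ, ih (fun i j => f (i + 1 + 1) j), Nat.sum_antidiagonal_succ]
    simp only [mul_add, mul_zero, zero_add, mul_one, add_assoc, Nat.reduceAdd]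

lemma catalan_two_mul_add_two (t : ℕ) :
    catalan (2 * (t + 1)) =
      ∑ ij ∈ antidiagonal t, 2 * catalan (2 * ij.1 + 1) * catalan (2 * ij.2) := by
  rw [mul_add_one, catalan_succ',
    sum_antidiagonal_two_mul_add_one (fun i j => catalan i * catalan j), sum_add_distrib,
    ← Nat.sum_antidiagonal_swap, ← sum_add_distrib]
  refine sum_congr rfl fun ij _ => ?_
  simp only [Prod.fst_swap, Prod.snd_swap]
  ring

instance : Finite DyckStep :=
  Finite.of_surjective (fun b : Bool => if b then U else D) fun s => by cases s <;> simp

def DyckStep.flip : DyckStep → DyckStep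
  | U => D
  | D => U

@[simp] lemma DyckStep.flip_flip (s : DyckStep) : s.flip.flip = s := by cases s <;> rfl

lemma DyckStep.flip_injective : Function.Injective DyckStep.flip :=
  Function.LeftInverse.injective flip_flip

namespace LatticePath

def height (w : List DyckStep) : ℤ := w.count U - w.count D

@[simp] lemma height_nil : height [] = 0 := rfl

@[simp] lemma height_cons_U (w : List DyckStep) : height (U :: w) = height w + 1 := by
  simp [height]; ring

@[simp] lemma height_cons_D (w : List DyckStep) : height (D :: w) = height w - 1 := by
  simp [height]; ring

@[simp] lemma height_append (v w : List DyckStep) : height (v ++ w) = height v + height w := by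
  simp only [height, count_append]; push_cast; ring

@[simp] lemma height_map_flip (w : List DyckStep) : height (w.map flip) = -height w := by
  induction w with
  | nil => rfl
  | cons s w ih => cases s <;> simp [DyckStep.flip, ih] <;> ring

lemma height_take_append (v w : List DyckStep) (k : ℕ) :
    height ((v ++ w).take k) = height (v.take k) + height (w.take (k - v.length)) := by
  rw [take_append, height_append]

lemma abs_height_take_succ_sub_le (w : List DyckStep) (k : ℕ) :
    |height (w.take (k + 1)) - height (w.take k)| ≤ 1 := by
  rw [take_add_one, height_append]
  rcases w[k]? with _ | _ | _ <;> simp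

lemma height_take_pos_of_ne_zero {w : List DyckStep} {j : ℕ} (h₁ : 0 < height (w.take 1))
    (hne : ∀ k, 0 < k → k ≤ j → height (w.take k) ≠ 0) {k : ℕ} (hk : 0 < k)
    (hkj : k ≤ j) :
    0 < height (w.take k) := by
  induction k with
  | zero => omega
  | succ k ih =>
    rcases Nat.eq_zero_or_pos k with rfl | hk'
    · exact h₁
    · have hpos := ih hk' (by omega)
      have hstep := abs_le.mp (abs_height_take_succ_sub_le w k)
      have hne' := hne (k + 1) hk hkj
      omega

lemma height_dyckWord (p : DyckWord) : height p.toList = 0 := by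
  simp [height, p.count_U_eq_count_D]

lemma height_take_dyckWord_nonneg (p : DyckWord) (k : ℕ) : 0 ≤ height (p.toList.take k) := by
  have := p.count_D_le_count_U k
  simp only [height]; omega

def toDyckWord (w : List DyckStep) (h₀ : height w = 0)
    (hnonneg : ∀ k, 0 ≤ height (w.take k)) : DyckWord where
  toList := w
  count_U_eq_count_D := by simp only [height] at h₀; omega
  count_D_le_count_U k := by have := hnonneg k; simp only [height] at this; omega

def AvoidsZero (w : List DyckStep) : Prop :=
  ∀ k, 0 < k → k ≤ w.length → height (w.take k) ≠ 0

def IsArch (w : List DyckStep) : Prop :=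
  w ≠ [] ∧ height w = 0 ∧ ∀ k, 0 < k → k < w.length → height (w.take k) ≠ 0

lemma AvoidsZero.height_take_pos {w : List DyckStep} (hw : AvoidsZero w) (hpos : 0 < height w)
    {k : ℕ} (hk : 0 < k) (hkw : k ≤ w.length) : 0 < height (w.take k) := by
  have hlen : 0 < w.length := by omega
  refine height_take_pos_of_ne_zero ?_ hw hk hkw
  rcases (hw 1 one_pos hlen).lt_or_gt with hneg | h
  -- after a first down-step the mirrored path would stay positive, so `w` would end below `0`
  · have hflip := height_take_pos_of_ne_zero (w := w.map flip) (j := w.length)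
      (by rw [← map_take, height_map_flip]; omega)
      (fun k hk hkw => by rw [← map_take, height_map_flip, neg_ne_zero]; exact hw k hk hkw)
      hlen le_rfl
    rw [← map_take, take_length, height_map_flip] at hflip
    omega
  · exact h

lemma AvoidsZero.eq_cons_dyckWord {w : List DyckStep} (hw : AvoidsZero w) (h₁ : height w = 1) :
    ∃ p : DyckWord, U :: p.toList = w := by
  obtain ⟨s, v, rfl⟩ := exists_cons_of_ne_nil (show w ≠ [] by rintro rfl; simp at h₁)
  have hpos := fun k => hw.height_take_pos (by omega) (k := k + 1) (by omega)
  obtain rfl : s = U := by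
    have := hpos 0 (by simp)
    cases s <;> simp_all
  refine ⟨toDyckWord v (by simpa using h₁) fun k => ?_, rfl⟩
  rcases le_or_gt k v.length with hk | hk
  · simpa using hpos k (by simpa using hk)
  · rw [take_of_length_le hk.le]; simp at h₁; omega

lemma isArch_nest (p : DyckWord) : IsArch p.nest.toList := by
  refine ⟨by simp [DyckWord.nest], height_dyckWord _, fun k hk hkl => ?_⟩
  have := (DyckWord.IsNested.nest (p := p)).2 hk hkl
  simp only [height]; omega

lemma IsArch.map_flip {w : List DyckStep} (hw : IsArch w) : IsArch (w.map flip) := by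
  obtain ⟨hne, h₀, hint⟩ := hw
  refine ⟨by simpa using hne, by simp [h₀], fun k hk hkl => ?_⟩
  rw [← map_take, height_map_flip, neg_ne_zero]
  exact hint k hk (by simpa using hkl)

lemma IsArch.eq_nest {w : List DyckStep} (hw : IsArch w) (hU : w.head? = some U) :
    ∃ p : DyckWord, p.nest.toList = w := by
  obtain ⟨hne, h₀, hint⟩ := hw
  obtain ⟨v, rfl⟩ : ∃ v, w = U :: v := by
    obtain ⟨s, v, rfl⟩ := exists_cons_of_ne_nil hne
    simp_all
  have hpos : ∀ k, 0 < k → k < v.length + 1 → 0 < height ((U :: v).take k) :=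
    fun k hk hkl => height_take_pos_of_ne_zero (by simp) (fun k hk hkl => hint k hk (by simpa))
      hk (Nat.le_pred_of_lt hkl)
  set q := toDyckWord (U :: v) h₀ fun k => by
    rcases Nat.eq_zero_or_pos k with rfl | hk
    · simp
    rcases lt_or_ge k (v.length + 1) with hkl | hkl
    · exact (hpos k hk hkl).le
    · rw [take_of_length_le (by simpa using hkl), h₀]
  have hq : q.IsNested := ⟨by simp [← DyckWord.toList_ne_nil, q, toDyckWord], fun k hk hkl => by
    have := hpos k hk (by simpa [q, toDyckWord] using hkl)
    simp only [q, toDyckWord, height] at this ⊢; omega⟩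
  exact ⟨q.denest hq, by rw [DyckWord.nest_denest]; rfl⟩

def zeroAvoidingToOne (m : ℕ) : Set (List DyckStep) :=
  {w | w.length = 2 * m + 1 ∧ AvoidsZero w ∧ height w = 1}

def arches (l : ℕ) : Set (List DyckStep) := {w | w.length = l ∧ IsArch w}

lemma cons_mem_zeroAvoidingToOne {p : DyckWord} {m : ℕ} (hp : p.semilength = m) :
    U :: p.toList ∈ zeroAvoidingToOne m := by
  refine ⟨by rw [length_cons, ← p.two_mul_semilength_eq_length, hp], ?_,
    by simp [height_dyckWord]⟩
  rintro (_ | k) hk -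
  · omega
  · have := height_take_dyckWord_nonneg p k
    simp only [take_succ_cons, height_cons_U]
    omega

lemma card_zeroAvoidingToOne (m : ℕ) : Nat.card (zeroAvoidingToOne m) = catalan m := by
  rw [← DyckWord.card_dyckWord_semilength_eq_catalan, ← Nat.card_eq_fintype_card]
  refine (Nat.card_eq_of_bijective
    (fun p => ⟨U :: p.1.toList, cons_mem_zeroAvoidingToOne p.2⟩) ⟨?_, ?_⟩).symm
  · intro p q h
    exact Subtype.ext (DyckWord.ext (by simpa using congrArg Subtype.val h))
  · rintro ⟨w, hlen, hw, h₁⟩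
    obtain ⟨p, rfl⟩ := hw.eq_cons_dyckWord h₁
    refine ⟨⟨p, ?_⟩, rfl⟩
    simp only [length_cons, ← p.two_mul_semilength_eq_length] at hlen
    omega

lemma length_nest (p : DyckWord) : p.nest.toList.length = 2 * (p.semilength + 1) := by
  rw [← DyckWord.semilength_nest, DyckWord.two_mul_semilength_eq_length]

lemma map_flip_mem_arches {w : List DyckStep} {l : ℕ} (hw : w ∈ arches l) :
    w.map flip ∈ arches l :=
  ⟨by simpa using hw.1, hw.2.map_flip⟩

lemma card_arches (m : ℕ) : Nat.card (arches (2 * (m + 1))) = 2 * catalan m := by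
  have hcard : Nat.card (Bool × {p : DyckWord // p.semilength = m}) = 2 * catalan m := by
    rw [Nat.card_prod, Nat.card_eq_fintype_card (α := Bool), Fintype.card_bool,
      Nat.card_eq_fintype_card, DyckWord.card_dyckWord_semilength_eq_catalan]
  have hnest (p : {p : DyckWord // p.semilength = m}) : p.1.nest.toList ∈ arches (2 * (m + 1)) :=
    ⟨by rw [length_nest, p.2], isArch_nest p.1⟩
  rw [← hcard]
  refine (Nat.card_eq_of_bijective (fun bp =>
      if bp.1 then ⟨_, hnest bp.2⟩ else ⟨_, map_flip_mem_arches (hnest bp.2)⟩)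
    ⟨?_, ?_⟩).symm
  · rintro ⟨b, p, hp⟩ ⟨b', p', hp'⟩ h
    have hflip := (map_injective_iff.mpr flip_injective).eq_iff
      (a := p.nest.toList) (b := p'.nest.toList)
    cases b <;> cases b' <;> simp_all [DyckWord.nest, DyckStep.flip, DyckWord.ext_iff]
  · rintro ⟨w, hlen, hw⟩
    obtain ⟨s, v, rfl⟩ := exists_cons_of_ne_nil hw.1
    cases s
    · obtain ⟨p, hp⟩ := hw.eq_nest rfl
      refine ⟨(true, ⟨p, ?_⟩), Subtype.ext (by simpa using hp)⟩
      have := length_nest p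
      rw [hp] at this
      omega
    · obtain ⟨p, hp⟩ := hw.map_flip.eq_nest rfl
      refine ⟨(false, ⟨p, ?_⟩), Subtype.ext ?_⟩
      · have := length_nest p
        rw [hp, length_map] at this
        omega
      · simp [hp, List.map_map, Function.comp_def]

def EvenZeroed (w : List DyckStep) : Prop :=
  ∀ k ≤ w.length, height (w.take k) = 0 → 4 ∣ k

lemma evenZeroed_append {v w : List DyckStep} (hv : height v = 0) (h4 : 4 ∣ v.length) :
    EvenZeroed (v ++ w) ↔ EvenZeroed v ∧ EvenZeroed w := by
  refine ⟨fun h => ⟨fun k hk hz => ?_, fun k hk hz => ?_⟩, fun ⟨hv', hw⟩ k hk hz => ?_⟩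
  · exact h k (by simp; omega) (by rwa [take_append_of_le_length hk])
  · refine (Nat.dvd_add_right h4).mp (h (v.length + k) (by simp; omega) ?_)
    rw [take_length_add_append, height_append, hv, hz, add_zero]
  · rw [height_take_append] at hz
    rcases le_total k v.length with hkv | hkv
    · rw [Nat.sub_eq_zero_of_le hkv, take_zero, height_nil, add_zero] at hz
      exact hv' k hkv hz
    · rw [take_of_length_le hkv, hv, zero_add] at hz
      have := hw (k - v.length) (by simp at hk; omega) hz
      omega

lemma AvoidsZero.evenZeroed {w : List DyckStep} (hw : AvoidsZero w) : EvenZeroed w := by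
  intro k hk hz
  obtain rfl : k = 0 := by by_contra h; exact hw k (Nat.pos_of_ne_zero h) hk hz
  exact dvd_zero 4

lemma IsArch.evenZeroed {w : List DyckStep} (hw : IsArch w) (h4 : 4 ∣ w.length) :
    EvenZeroed w := by
  intro k hk hz
  rcases Nat.eq_zero_or_pos k with rfl | hk₀
  · exact dvd_zero 4
  rcases hk.lt_or_eq with hlt | rfl
  · exact absurd hz (hw.2.2 k hk₀ hlt)
  · exact h4

lemma IsArch.length_le_of_append_eq {a a' e e' : List DyckStep} (ha' : IsArch a')
    (ha : height a = 0) (ha₀ : a ≠ []) (h : a ++ e = a' ++ e') : a'.length ≤ a.length := by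
  by_contra! hlt
  have htake : a'.take a.length = a := by
    rw [← take_append_of_le_length hlt.le (l₂ := e'), ← h, take_left]
  exact ha'.2.2 a.length (length_pos_iff.mpr ha₀) hlt (by rw [htake, ha])

lemma IsArch.append_inj {a a' e e' : List DyckStep} (ha : IsArch a) (ha' : IsArch a')
    (h : a ++ e = a' ++ e') : a = a' ∧ e = e' :=
  List.append_inj h (le_antisymm (ha.length_le_of_append_eq ha'.2.1 ha'.1 h.symm)
    (ha'.length_le_of_append_eq ha.2.1 ha.1 h))

lemma AvoidsZero.length_le_of_append_eq {e e' p p' : List DyckStep} (hp : AvoidsZero p)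
    (he : height e = 0) (he' : height e' = 0) (h : e ++ p = e' ++ p') :
    e'.length ≤ e.length := by
  by_contra! hlt
  have hle : e'.length ≤ e.length + p.length := by
    have := congrArg length h
    simp only [length_append] at this
    omega
  have htake : (e ++ p).take e'.length = e ++ p.take (e'.length - e.length) := by
    rw [← take_length_add_append]; congr 1; omega
  refine hp (e'.length - e.length) (by omega) (by omega) ?_
  have := congrArg height htake
  rw [h, take_left, height_append, he, he'] at this
  omega

lemma AvoidsZero.append_inj {e e' p p' : List DyckStep} (hp : AvoidsZero p) (hp' : AvoidsZero p')
    (he : height e = 0) (he' : height e' = 0) (h : e ++ p = e' ++ p') : e = e' ∧ p = p' :=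
  List.append_inj h (le_antisymm (hp'.length_le_of_append_eq he' he h.symm)
    (hp.length_le_of_append_eq he he' h))

lemma exists_isArch_append {w : List DyckStep} (hw : w ≠ []) (h₀ : height w = 0) :
    ∃ a e, IsArch a ∧ a ++ e = w := by
  classical
  have hex : ∃ k, 0 < k ∧ height (w.take k) = 0 :=
    ⟨w.length, length_pos_iff.mpr hw, by simpa⟩
  obtain ⟨hpos, hzero⟩ := Nat.find_spec hex
  have hle : Nat.find hex ≤ w.length := Nat.find_min' hex ⟨length_pos_iff.mpr hw, by simpa⟩
  refine ⟨w.take (Nat.find hex), w.drop (Nat.find hex), ⟨?_, hzero, fun k hk hkl => ?_⟩,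
    take_append_drop _ _⟩
  · rw [← length_pos_iff, length_take]
    exact lt_min hpos (length_pos_iff.mpr hw)
  · rw [length_take, min_eq_left hle] at hkl
    rw [take_take, min_eq_left hkl.le]
    exact fun hz => Nat.find_min hex hkl ⟨hk, hz⟩

lemma exists_append_avoidsZero (w : List DyckStep) :
    ∃ e p, height e = 0 ∧ AvoidsZero p ∧ e ++ p = w := by
  classical
  set k₀ := Nat.findGreatest (fun k => height (w.take k) = 0) w.length
  have hk₀ : height (w.take k₀) = 0 :=
    Nat.findGreatest_spec (P := fun k => height (w.take k) = 0) (Nat.zero_le _) (by simp)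
  refine ⟨w.take k₀, w.drop k₀, hk₀, fun k hk hkl => ?_, take_append_drop _ _⟩
  have hz := Nat.findGreatest_is_greatest (P := fun k => height (w.take k) = 0)
    (lt_add_of_pos_right k₀ hk) (by simp at hkl; omega)
  rwa [take_add, height_append, hk₀, zero_add] at hz

def balancedEvenZeroed (t : ℕ) : Set (List DyckStep) :=
  {w | w.length = 4 * t ∧ EvenZeroed w ∧ height w = 0}

def evenZeroedToOne (n : ℕ) : Set (List DyckStep) :=
  {w | w.length = 4 * n + 1 ∧ EvenZeroed w ∧ height w = 1}

lemma finite_of_forall_length_eq {S : Set (List DyckStep)} {l : ℕ}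
    (hS : ∀ w ∈ S, w.length = l) : Finite S :=
  ((List.finite_length_eq DyckStep l).subset hS).to_subtype

instance (t : ℕ) : Finite (balancedEvenZeroed t) := finite_of_forall_length_eq fun _ h => h.1
instance (l : ℕ) : Finite (arches l) := finite_of_forall_length_eq fun _ h => h.1
instance (m : ℕ) : Finite (zeroAvoidingToOne m) := finite_of_forall_length_eq fun _ h => h.1

lemma card_balancedEvenZeroed_succ (t : ℕ) :
    Nat.card (balancedEvenZeroed (t + 1)) = ∑ ij ∈ antidiagonal t,
      Nat.card (arches (4 * (ij.1 + 1))) * Nat.card (balancedEvenZeroed ij.2) := by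
  refine card_eq_sum_antidiagonal_of_unique_append (fun i => arches (4 * (i + 1)))
    balancedEvenZeroed _ t ?_ ?_ ?_
  · rintro i j hij a ⟨ha_len, ha⟩ e ⟨he_len, he, he₀⟩
    refine ⟨by simp [ha_len, he_len]; omega, ?_, by simp [ha.2.1, he₀]⟩
    rw [evenZeroed_append ha.2.1 (by simp [ha_len])]
    exact ⟨ha.evenZeroed (by simp [ha_len]), he⟩
  · rintro w ⟨hw_len, hw, hw₀⟩
    obtain ⟨a, e, ha, rfl⟩ := exists_isArch_append (by rintro rfl; simp at hw_len) hw₀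
    have h4 : 4 ∣ a.length := hw a.length (by simp) (by rw [take_left, ha.2.1])
    obtain ⟨i, hi⟩ : ∃ i, a.length = 4 * (i + 1) := by
      obtain ⟨k, hk⟩ := h4
      have := length_pos_iff.mpr ha.1
      exact ⟨k - 1, by omega⟩
    rw [evenZeroed_append ha.2.1 h4] at hw
    simp only [length_append, height_append, ha.2.1, zero_add] at hw_len hw₀
    exact ⟨i, t - i, by omega, a, ⟨hi, ha⟩, e, ⟨by omega, hw.2, hw₀⟩, rfl⟩
  · rintro i j i' j' a e a' e' ⟨ha_len, ha⟩ - ⟨ha'_len, ha'⟩ - h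
    obtain ⟨rfl, -⟩ := ha.append_inj ha' h
    exact ⟨by omega, rfl⟩

lemma card_balancedEvenZeroed (t : ℕ) : Nat.card (balancedEvenZeroed t) = catalan (2 * t) := by
  induction t using Nat.strong_induction_on with
  | _ t ih =>
  rcases t with _ | t
  · have : balancedEvenZeroed 0 = {[]} := by
      ext w
      simp only [balancedEvenZeroed, Set.mem_ofPred_eq, Set.mem_singleton_iff]
      constructor
      · exact fun h => eq_nil_of_length_eq_zero h.1
      · rintro rfl
        exact ⟨rfl, fun k hk _ => by simp_all, rfl⟩
    simp [this]
  · rw [card_balancedEvenZeroed_succ, catalan_two_mul_add_two]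
    refine sum_congr rfl fun ij hij => ?_
    have hj : ij.2 < t + 1 := by have := HasAntidiagonal.mem_antidiagonal.mp hij; omega
    rw [show 4 * (ij.1 + 1) = 2 * (2 * ij.1 + 1 + 1) by ring, card_arches, ih _ hj]

lemma card_evenZeroedToOne (n : ℕ) : Nat.card (evenZeroedToOne n) =
    ∑ ij ∈ antidiagonal n, catalan (2 * ij.1) * catalan (2 * ij.2) := by
  rw [card_eq_sum_antidiagonal_of_unique_append balancedEvenZeroed
    (fun j => zeroAvoidingToOne (2 * j)) _ n ?_ ?_ ?_]
  · simp only [card_balancedEvenZeroed, card_zeroAvoidingToOne]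
  · rintro i j hij e ⟨he_len, he, he₀⟩ p ⟨hp_len, hp, hp₁⟩
    refine ⟨by simp [he_len, hp_len]; omega, ?_, by simp [he₀, hp₁]⟩
    rw [evenZeroed_append he₀ (by simp [he_len])]
    exact ⟨he, hp.evenZeroed⟩
  · rintro w ⟨hw_len, hw, hw₁⟩
    obtain ⟨e, p, he₀, hp, rfl⟩ := exists_append_avoidsZero w
    have h4 : 4 ∣ e.length := hw e.length (by simp) (by rw [take_left, he₀])
    obtain ⟨i, hi⟩ := h4
    rw [evenZeroed_append he₀ ⟨i, hi⟩] at hw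
    simp only [length_append, height_append, he₀, zero_add] at hw_len hw₁
    exact ⟨i, n - i, by omega, e, ⟨hi, hw.1, he₀⟩, p, ⟨by omega, hp, hw₁⟩, rfl⟩
  · rintro i j i' j' e p e' p' ⟨hi, -, he₀⟩ ⟨-, hp, -⟩ ⟨hi', -, he'₀⟩ ⟨-, hp', -⟩ h
    obtain ⟨rfl, -⟩ := hp.append_inj hp' he₀ he'₀ h
    exact ⟨by omega, rfl⟩

def ofBoolFn {l : ℕ} (p : Fin l → Bool) : List DyckStep :=
  List.ofFn fun i => if p i then U else D

@[simp] lemma length_ofBoolFn {l : ℕ} (p : Fin l → Bool) : (ofBoolFn p).length = l :=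
  length_ofFn

lemma psum_eq_height_take {l : ℕ} (p : Fin l → Bool) (k : ℕ) :
    psum p k = height ((ofBoolFn p).take k) := by
  have hheight (w : List DyckStep) : height w = (w.map fun s => if s = U then 1 else -1).sum := by
    induction w with
    | nil => rfl
    | cons s w ih => cases s <;> simp [ih] <;> ring
  rw [hheight, map_take, ofBoolFn, map_ofFn, sum_take_ofFn, psum]
  refine sum_congr rfl fun i _ => ?_
  cases h : p i <;> simp [h]

lemma psum_length {l : ℕ} (p : Fin l → Bool) : psum p l = height (ofBoolFn p) := by
  rw [psum_eq_height_take, take_of_length_le (length_ofBoolFn p).le]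

lemma isEvenZeroed_iff {l : ℕ} (p : Fin l → Bool) :
    IsEvenZeroed p ↔ EvenZeroed (ofBoolFn p) := by
  simp only [IsEvenZeroed, EvenZeroed, psum_eq_height_take, length_ofBoolFn]

lemma card_subtype_ofBoolFn_mem {l : ℕ} {S : Set (List DyckStep)}
    (hS : ∀ w ∈ S, w.length = l) :
    Nat.card {p : Fin l → Bool // ofBoolFn p ∈ S} = Nat.card S := by
  refine Nat.card_eq_of_bijective (fun p => ⟨ofBoolFn p.1, p.2⟩)
    ⟨fun p q h => ?_, fun w => ?_⟩
  · have h' : ofBoolFn p.1 = ofBoolFn q.1 := congrArg Subtype.val h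
    refine Subtype.ext (funext fun i => ?_)
    have := congrFun (ofFn_injective h') i
    cases hp : p.1 i <;> cases hq : q.1 i <;> simp_all
  · obtain ⟨w, hw⟩ := w
    obtain rfl := hS w hw
    have hofFn : ofBoolFn (fun i => w[i.1] == U) = w := by
      conv_rhs => rw [← List.ofFn_getElem (xs := w)]
      refine congrArg List.ofFn (funext fun i => ?_)
      cases h : w[i.1] <;> simp [h]
    exact ⟨⟨fun i => w[i.1] == U, by rw [hofFn]; exact hw⟩, Subtype.ext hofFn⟩

end LatticePath

open LatticePath in
/-- For every nonnegative integer `n`, the number of even-zeroed paths of length `4n + 1`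
whose total sum of steps is `1` (even-zeroed paths from the origin to `(4n+1, 1)`)
equals `∑_{i+j=n} C_{2i} C_{2j}`. -/
theorem card_evenZeroed_to_one (n : ℕ) :
    Nat.card {p : Fin (4 * n + 1) → Bool // IsEvenZeroed p ∧ psum p (4 * n + 1) = 1} =
      ∑ ij ∈ Finset.HasAntidiagonal.antidiagonal n, catalan (2 * ij.1) * catalan (2 * ij.2) := by
  have hmem (p : Fin (4 * n + 1) → Bool) :
      IsEvenZeroed p ∧ psum p (4 * n + 1) = 1 ↔ ofBoolFn p ∈ evenZeroedToOne n := by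
    simp [evenZeroedToOne, isEvenZeroed_iff, psum_length]
  rw [Nat.card_congr (Equiv.subtypeEquivRight hmem), card_subtype_ofBoolFn_mem fun _ h => h.1,
    card_evenZeroedToOne]
end

section
/- For every positive integer n, the number of even-zeroed balanced 2n-paths equals 2 · ∑_{k=1}^{n} C_{2k−1} · (the number of even-zeroed balanced 2(n−k)-paths). -/
/-!
Cut an even-zeroed balanced path of length `4n > 0` at its first return to the axis. This
happens at a step `4k` with `1 ≤ k ≤ n`; the prefix is a primitive path of length `4k` (balanced,
never on the axis in between) and the suffix is an arbitrary even-zeroed balanced path of length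
`4(n - k)`, and conversely every such concatenation is even-zeroed. A primitive path of length
`2m` is `U w D` or its mirror image, with `w` a Dyck path of semilength `m - 1`, so there are
`2 C_{m-1}` of them; for `m = 2k` this is `2 C_{2k-1}`.
-/

open Finset

namespace BoolPath

def step (b : Bool) : ℤ := if b then 1 else -1

def height (L : List Bool) : ℤ := (L.map step).sum

@[simp] lemma height_nil : height [] = 0 := rfl

@[simp] lemma height_cons (b : Bool) (L : List Bool) : height (b :: L) = step b + height L := by
  simp [height]

@[simp] lemma height_append (L M : List Bool) : height (L ++ M) = height L + height M := by
  simp [height]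

lemma height_map_not (L : List Bool) : height (L.map not) = -height L := by
  induction L with
  | nil => rfl
  | cons b L ih => cases b <;> simp [ih, step] <;> ring

lemma height_take_succ {L : List Bool} {j : ℕ} (h : j < L.length) :
    height (L.take (j + 1)) = height (L.take j) + step L[j] := by
  rw [← List.take_concat_get' L j h, height_append]; simp [height]

lemma height_take_append (A B : List Bool) (k : ℕ) :
    height ((A ++ B).take k) = height (A.take k) + height (B.take (k - A.length)) := by
  rw [List.take_append, height_append]

def paths (l : ℕ) : Finset (List Bool) := univ.image (List.ofFn (n := l))

lemma mem_paths {l : ℕ} {L : List Bool} : L ∈ paths l ↔ L.length = l := by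
  refine ⟨fun h => ?_, fun h => ?_⟩
  · obtain ⟨p, -, rfl⟩ := mem_image.mp h
    exact List.length_ofFn
  · subst h
    exact mem_image.mpr ⟨_, mem_univ _, List.ofFn_getElem⟩

def IsEvenZeroed (L : List Bool) : Prop := ∀ k ≤ L.length, height (L.take k) = 0 → 4 ∣ k

instance : DecidablePred IsEvenZeroed := fun L => by unfold IsEvenZeroed; infer_instance

def IsPrimitive (L : List Bool) : Prop :=
  L ≠ [] ∧ height L = 0 ∧ ∀ j < L.length, 0 < j → height (L.take j) ≠ 0

instance : DecidablePred IsPrimitive := fun L => by unfold IsPrimitive; infer_instance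

lemma IsPrimitive.isEvenZeroed_append_iff {A : List Bool} (hA : IsPrimitive A) (B : List Bool) :
    IsEvenZeroed (A ++ B) ↔ 4 ∣ A.length ∧ IsEvenZeroed B := by
  obtain ⟨-, hzero, hint⟩ := hA
  have hshift : ∀ j, height ((A ++ B).take (A.length + j)) = height (B.take j) := fun j => by
    rw [height_take_append, List.take_of_length_le (by omega), hzero]; simp
  constructor
  · intro h
    have hA4 : 4 ∣ A.length := h _ (by simp) (by simpa using hshift 0)
    refine ⟨hA4, fun j hj hj0 => ?_⟩
    have := h (A.length + j) (by simpa using hj) (by rw [hshift]; exact hj0)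
    omega
  · rintro ⟨hA4, hB⟩ k hk hk0
    obtain hlt | hle := Nat.lt_or_ge k A.length
    · rw [height_take_append, Nat.sub_eq_zero_of_le hlt.le] at hk0
      by_contra hk4
      exact hint k hlt (Nat.pos_of_ne_zero (by rintro rfl; simp at hk4)) (by simpa using hk0)
    · obtain ⟨j, rfl⟩ := Nat.exists_eq_add_of_le hle
      have := hB j (by simpa using hk) (by rwa [hshift] at hk0)
      omega

lemma IsPrimitive.length_le_of_append_eq {A A' B B' : List Bool} (hA : IsPrimitive A)
    (hA' : IsPrimitive A') (h : A ++ B = A' ++ B') : A'.length ≤ A.length := by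
  by_contra! hlt
  apply hA'.2.2 A.length hlt (List.length_pos_iff.mpr hA.1)
  have := congrArg (fun L => height (L.take A.length)) h
  simp only [height_take_append, List.take_length, Nat.sub_self, List.take_zero,
    Nat.sub_eq_zero_of_le hlt.le] at this
  simpa [hA.2.1] using this.symm

lemma IsPrimitive.append_inj {A A' B B' : List Bool} (hA : IsPrimitive A) (hA' : IsPrimitive A')
    (h : A ++ B = A' ++ B') : A = A' ∧ B = B' :=
  List.append_inj h (le_antisymm (hA'.length_le_of_append_eq hA h.symm)
    (hA.length_le_of_append_eq hA' h))

lemma exists_isPrimitive_append {L : List Bool} (hne : L ≠ []) (hL : height L = 0) :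
    ∃ A B, IsPrimitive A ∧ L = A ++ B := by
  have hex : ∃ r, 0 < r ∧ height (L.take r) = 0 :=
    ⟨L.length, List.length_pos_iff.mpr hne, by rwa [List.take_length]⟩
  set r := Nat.find hex
  obtain ⟨hr0, hr⟩ : 0 < r ∧ height (L.take r) = 0 := Nat.find_spec hex
  refine ⟨L.take r, L.drop r, ⟨?_, hr, fun j hj hj0 => ?_⟩, (List.take_append_drop r L).symm⟩
  · simpa [List.take_eq_nil_iff] using ⟨hr0.ne', hne⟩
  · rw [List.length_take] at hj
    rw [List.take_take, min_eq_left (by omega)]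
    exact fun h => Nat.find_min hex (by omega) ⟨hj0, h⟩

def evenZeroedBalanced (l : ℕ) : Finset (List Bool) :=
  {L ∈ paths l | height L = 0 ∧ IsEvenZeroed L}

def primitive (l : ℕ) : Finset (List Bool) := {L ∈ paths l | IsPrimitive L}

lemma card_evenZeroedBalanced {n : ℕ} (hn : 0 < n) :
    #(evenZeroedBalanced (4 * n)) =
      ∑ k ∈ Icc 1 n, #(primitive (4 * k)) * #(evenZeroedBalanced (4 * (n - k))) := by
  simp_rw [← card_product]
  rw [← card_sigma]
  symm
  refine card_bij (fun x _ => x.2.1 ++ x.2.2) ?_ ?_ ?_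
  · rintro ⟨k, A, B⟩ h
    simp only [mem_sigma, mem_Icc, mem_product, evenZeroedBalanced, primitive, mem_filter,
      mem_paths] at h ⊢
    obtain ⟨⟨hk1, hkn⟩, ⟨hAl, hA⟩, hBl, hB0, hB⟩ := h
    refine ⟨by simp [hAl, hBl]; omega, by simp [hA.2.1, hB0],
      (hA.isEvenZeroed_append_iff B).mpr ⟨by simp [hAl], hB⟩⟩
  · rintro ⟨k, A, B⟩ h ⟨k', A', B'⟩ h' heq
    simp only [mem_sigma, mem_product, primitive, mem_filter, mem_paths] at h h'
    obtain ⟨rfl, rfl⟩ := h.2.1.2.append_inj h'.2.1.2 heq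
    obtain rfl : k = k' := by omega
    rfl
  · intro L hL
    simp only [evenZeroedBalanced, mem_filter, mem_paths] at hL
    obtain ⟨hLl, hL0, hLez⟩ := hL
    obtain ⟨A, B, hA, rfl⟩ := exists_isPrimitive_append (by rintro rfl; simp at hLl; omega) hL0
    obtain ⟨⟨k, hk⟩, hB⟩ := (hA.isEvenZeroed_append_iff B).mp hLez
    have hApos := List.length_pos_iff.mpr hA.1
    simp only [List.length_append, height_append, hA.2.1, zero_add] at hLl hL0
    refine ⟨⟨k, A, B⟩, ?_, rfl⟩
    simp only [mem_sigma, mem_Icc, mem_product, evenZeroedBalanced, primitive, mem_filter,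
      mem_paths]
    exact ⟨⟨by omega, by omega⟩, ⟨hk, hA⟩, by omega, hL0, hB⟩

lemma IsPrimitive.map_not {L : List Bool} (hL : IsPrimitive L) : IsPrimitive (L.map not) := by
  obtain ⟨hne, hzero, hint⟩ := hL
  refine ⟨by simpa using hne, by rw [height_map_not, hzero, neg_zero], fun j hj hj0 => ?_⟩
  rw [← List.map_take, height_map_not, neg_ne_zero]
  exact hint j (by simpa using hj) hj0

/-- Heights move by `±1` and never vanish inside a primitive path, so they keep the sign of its
first step. -/
lemma IsPrimitive.height_take_pos {L : List Bool} (hL : IsPrimitive L)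
    (hhead : L.head? = some true) {j : ℕ} (hj0 : 0 < j) (hj : j < L.length) :
    0 < height (L.take j) := by
  induction j with
  | zero => omega
  | succ j ih =>
    obtain rfl | hj' := Nat.eq_zero_or_pos j
    · obtain ⟨b, t, rfl⟩ := List.exists_cons_of_ne_nil hL.1
      simp_all [step]
    · have hprev := ih hj' (by omega)
      have hsucc := height_take_succ (L := L) (j := j) (by omega)
      have hnz := hL.2.2 (j + 1) hj (by omega)
      unfold step at hsucc
      split_ifs at hsucc <;> omega

lemma IsPrimitive.height_take_nonneg {L : List Bool} (hL : IsPrimitive L)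
    (hhead : L.head? = some true) (j : ℕ) : 0 ≤ height (L.take j) := by
  obtain rfl | hj0 := Nat.eq_zero_or_pos j
  · simp
  obtain hj | hj := Nat.lt_or_ge j L.length
  · exact (hL.height_take_pos hhead hj0 hj).le
  · rw [List.take_of_length_le hj, hL.2.1]

def boolEquivDyckStep : Bool ≃ DyckStep where
  toFun b := bif b then .U else .D
  invFun s := s == .U
  left_inv b := by cases b <;> rfl
  right_inv s := by cases s <;> rfl

lemma height_eq_count_sub (L : List Bool) :
    height L = ((L.map boolEquivDyckStep).count .U : ℤ) - (L.map boolEquivDyckStep).count .D := by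
  induction L with
  | nil => rfl
  | cons b L ih => cases b <;> simp [ih, step, boolEquivDyckStep] <;> ring

lemma height_map_boolEquivDyckStep_symm (M : List DyckStep) :
    height (M.map boolEquivDyckStep.symm) = (M.count .U : ℤ) - M.count .D := by
  rw [height_eq_count_sub, List.map_map, Equiv.self_comp_symm, List.map_id]

def IsPrimitive.toDyckWord {L : List Bool} (hL : IsPrimitive L) (hhead : L.head? = some true) :
    DyckWord where
  toList := L.map boolEquivDyckStep
  count_U_eq_count_D := by
    have := height_eq_count_sub L
    rw [hL.2.1] at this
    omega
  count_D_le_count_U i := by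
    have := hL.height_take_nonneg hhead i
    rw [height_eq_count_sub, List.map_take] at this
    omega

lemma IsPrimitive.isNested_toDyckWord {L : List Bool} (hL : IsPrimitive L)
    (hhead : L.head? = some true) : (hL.toDyckWord hhead).IsNested := by
  refine ⟨DyckWord.toList_ne_nil.mp (by simpa [toDyckWord] using hL.1), fun i hi0 hi => ?_⟩
  have := hL.height_take_pos hhead hi0 (by simpa [toDyckWord] using hi)
  rw [height_eq_count_sub, List.map_take] at this
  exact_mod_cast sub_pos.mp this

lemma isPrimitive_map_of_isNested {p : DyckWord} (hp : p.IsNested) :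
    IsPrimitive (p.toList.map boolEquivDyckStep.symm) ∧
      (p.toList.map boolEquivDyckStep.symm).head? = some true := by
  have hne : p.toList ≠ [] := DyckWord.toList_ne_nil.mpr hp.1
  refine ⟨⟨by simpa using hne, ?_, fun j hj hj0 => ?_⟩, ?_⟩
  · rw [height_map_boolEquivDyckStep_symm, p.count_U_eq_count_D, sub_self]
  · rw [← List.map_take, height_map_boolEquivDyckStep_symm]
    have := hp.2 hj0 (by simpa using hj)
    omega
  · rw [List.head?_map, List.head?_eq_some_head hne, p.head_eq_U]
    rfl

lemma mem_filter_primitive {l : ℕ} {L : List Bool} :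
    L ∈ (primitive l).filter (·.head? = some true) ↔
      L.length = l ∧ IsPrimitive L ∧ L.head? = some true := by
  simp [primitive, mem_paths, and_assoc]

def positivePrimitiveEquiv (m : ℕ) :
    {L // L ∈ (primitive (2 * m)).filter (·.head? = some true)} ≃
      {p : DyckWord // p.IsNested ∧ p.semilength = m} where
  toFun L :=
    have h := mem_filter_primitive.mp L.2
    ⟨h.2.1.toDyckWord h.2.2, h.2.1.isNested_toDyckWord h.2.2, by
      have hlen : (h.2.1.toDyckWord h.2.2).toList.length = 2 * m := by
        simpa [IsPrimitive.toDyckWord] using h.1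
      have := (h.2.1.toDyckWord h.2.2).two_mul_semilength_eq_length
      omega⟩
  invFun p := ⟨p.1.toList.map boolEquivDyckStep.symm, mem_filter_primitive.mpr
    ⟨by rw [List.length_map, ← p.1.two_mul_semilength_eq_length, p.2.2],
      isPrimitive_map_of_isNested p.2.1⟩⟩
  left_inv L := Subtype.ext (by simp [IsPrimitive.toDyckWord, List.map_map])
  right_inv p := Subtype.ext (DyckWord.ext (by simp [IsPrimitive.toDyckWord, List.map_map]))

def nestedDyckWordEquiv (m : ℕ) :
    {p : DyckWord // p.IsNested ∧ p.semilength = m + 1} ≃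
      {q : DyckWord // q.semilength = m} where
  toFun p := ⟨p.1.denest p.2.1, by
    have := congrArg DyckWord.semilength (p.1.nest_denest p.2.1)
    rw [DyckWord.semilength_nest] at this
    have := p.2.2
    omega⟩
  invFun q := ⟨q.1.nest, .nest, by rw [DyckWord.semilength_nest, q.2]⟩
  left_inv p := Subtype.ext (p.1.nest_denest p.2.1)
  right_inv q := Subtype.ext q.1.denest_nest

lemma card_filter_head_eq_true_primitive (m : ℕ) :
    #((primitive (2 * (m + 1))).filter (·.head? = some true)) = catalan m := by
  rw [← Nat.card_eq_finsetCard,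
    Nat.card_congr ((positivePrimitiveEquiv _).trans (nestedDyckWordEquiv m)),
    Nat.card_eq_fintype_card, DyckWord.card_dyckWord_semilength_eq_catalan]

lemma head?_map_not_eq_some_true {L : List Bool} (hL : L ≠ []) :
    (L.map not).head? = some true ↔ ¬L.head? = some true := by
  obtain ⟨b, t, rfl⟩ := List.exists_cons_of_ne_nil hL
  cases b <;> simp

lemma card_primitive (m : ℕ) : #(primitive (2 * (m + 1))) = 2 * catalan m := by
  set s := primitive (2 * (m + 1))
  have hflip : #(s.filter (¬·.head? = some true)) = #(s.filter (·.head? = some true)) := by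
    refine card_nbij' (List.map not) (List.map not) (fun L hL => ?_) (fun L hL => ?_)
      (fun L _ => by simp [Function.comp_def]) (fun L _ => by simp [Function.comp_def])
    all_goals
      simp only [s, mem_coe, primitive, mem_filter, mem_paths] at hL ⊢
      obtain ⟨⟨hlen, hprim⟩, hhead⟩ := hL
      refine ⟨⟨by simpa using hlen, hprim.map_not⟩, ?_⟩
      rw [head?_map_not_eq_some_true hprim.1]
      tauto
  rw [← card_filter_add_card_filter_not (·.head? = some true), hflip,
    card_filter_head_eq_true_primitive, two_mul]

end BoolPath

lemma psum_eq_height_take {l : ℕ} (p : Fin l → Bool) (k : ℕ) :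
    psum p k = BoolPath.height ((List.ofFn p).take k) := by
  rw [psum, BoolPath.height, List.map_take, List.map_ofFn, List.sum_take_ofFn]
  rfl

lemma isBalanced_iff {l : ℕ} (p : Fin l → Bool) :
    IsBalanced p ↔ BoolPath.height (List.ofFn p) = 0 := by
  rw [IsBalanced, psum_eq_height_take, List.take_of_length_le (by simp)]

lemma isEvenZeroed_iff {l : ℕ} (p : Fin l → Bool) :
    IsEvenZeroed p ↔ BoolPath.IsEvenZeroed (List.ofFn p) := by
  simp only [IsEvenZeroed, BoolPath.IsEvenZeroed, psum_eq_height_take, List.length_ofFn]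

lemma natCard_isBalanced_isEvenZeroed (l : ℕ) :
    Nat.card {p : Fin l → Bool // IsBalanced p ∧ IsEvenZeroed p} =
      #(BoolPath.evenZeroedBalanced l) := by
  simp only [isBalanced_iff, isEvenZeroed_iff, BoolPath.evenZeroedBalanced, BoolPath.paths,
    filter_image, card_image_of_injective _ List.ofFn_injective, Nat.card_eq_fintype_card,
    Fintype.card_subtype]

/-- For every positive integer `n`, the number of even-zeroed balanced `2n`-paths equals
`2 ∑_{k=1}^{n} C_{2k−1} ·` (the number of even-zeroed balanced `2(n−k)`-paths). -/
theorem card_evenZeroed_balanced_recursion (n : ℕ) (hn : 0 < n) :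
    Nat.card {p : Fin (2 * (2 * n)) → Bool // IsBalanced p ∧ IsEvenZeroed p} =
      2 * ∑ k ∈ Finset.Icc 1 n, catalan (2 * k - 1) *
        Nat.card {p : Fin (2 * (2 * (n - k))) → Bool // IsBalanced p ∧ IsEvenZeroed p} := by
  rw [natCard_isBalanced_isEvenZeroed, show 2 * (2 * n) = 4 * n by ring,
    BoolPath.card_evenZeroedBalanced hn, mul_sum]
  refine sum_congr rfl fun k hk => ?_
  rw [natCard_isBalanced_isEvenZeroed, show 2 * (2 * (n - k)) = 4 * (n - k) by ring,
    show 4 * k = 2 * (2 * k - 1 + 1) by grind, BoolPath.card_primitive, mul_assoc]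
end
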